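/- Let Herm denote the set of Hermitian matrix polynomials in P_m(ℂ^{n×n}), let P ∈ Herm be regular, and let λ ∈ ℝ and x ∈ ℂⁿ with x^H x = 1. Set r := −P(λ)x and Λ_m := (1, λ, …, λ^m)ᵀ. Then η_F^{Herm}(λ, x, P) = sqrt(2‖r‖₂² − |x^H r|²)/‖Λ_m‖₂ ≤ √2 · η(λ, x, P), and η_2^{Herm}(λ, x, P) = η(λ, x, P) = ‖r‖₂/‖Λ_m‖₂. Moreover, defining ΔA_j := (λ^j/‖Λ_m‖₂²)·(x r^H + r x^H − (r^H x) x x^H) for j = 0,…,m, the polynomial ΔP(z) := Σ_{j=0}^m z^j ΔA_j is the unique Hermitian polynomial in P_m(ℂ^{n×n}) satisfying P(λ)x + ΔP(λ)x = 0 and |||ΔP|||_F = η_F^{Herm}(λ, x, P). -/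

import Mathlib

open scoped ComplexConjugate
open Matrix

noncomputable section

variable {ι : Type*} [Fintype ι] [DecidableEq ι]

/-- Evaluation of the matrix polynomial with coefficient list `A` at the point `z`. -/
def polyEval {m : ℕ} (A : Fin (m+1) → Matrix ι ι ℂ) (z : ℂ) : Matrix ι ι ℂ :=
  ∑ j : Fin (m+1), z ^ (j : ℕ) • A j

/-- Squared Euclidean norm of a complex vector. -/
def vecNormSq (x : ι → ℂ) : ℝ := ∑ i, ‖x i‖ ^ 2

/-- Euclidean norm of a complex vector. -/
def vecNorm (x : ι → ℂ) : ℝ := Real.sqrt (vecNormSq x)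

/-- `‖(1, z, …, z^m)‖₂²`. -/
def lamNormSq (m : ℕ) (z : ℂ) : ℝ := ∑ j : Fin (m+1), ‖z ^ (j : ℕ)‖ ^ 2

/-- Squared Frobenius norm of a matrix. -/
def frobNormSq (M : Matrix ι ι ℂ) : ℝ := ∑ i, ∑ k, ‖M i k‖ ^ 2

/-- Spectral (operator 2-) norm of a matrix. -/
def specNorm (M : Matrix ι ι ℂ) : ℝ := ‖Matrix.toEuclideanCLM (𝕜 := ℂ) M‖

/-- Frobenius norm of a matrix polynomial: `(Σ_j ‖A_j‖_F²)^{1/2}`. -/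
def polyNormF {m : ℕ} (A : Fin (m+1) → Matrix ι ι ℂ) : ℝ :=
  Real.sqrt (∑ j, frobNormSq (A j))

/-- Spectral norm of a matrix polynomial: `(Σ_j ‖A_j‖₂²)^{1/2}`. -/
def polyNorm2 {m : ℕ} (A : Fin (m+1) → Matrix ι ι ℂ) : ℝ :=
  Real.sqrt (∑ j, specNorm (A j) ^ 2)

/-- Structured backward error of `(lam, x)` as an approximate eigenpair of the matrix
polynomial `A`, with respect to the polynomial norm `N` and the structure class `S`. -/
def eta {m : ℕ} (N : (Fin (m+1) → Matrix ι ι ℂ) → ℝ)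
    (S : Set (Fin (m+1) → Matrix ι ι ℂ)) (lam : ℂ) (x : ι → ℂ)
    (A : Fin (m+1) → Matrix ι ι ℂ) : ℝ :=
  sInf {t | ∃ ΔA ∈ S, (polyEval A lam + polyEval ΔA lam) *ᵥ x = 0 ∧ t = N ΔA}

/-- A matrix polynomial is regular if `det P(z) ≠ 0` for some `z`. -/
def Regular {m : ℕ} (A : Fin (m+1) → Matrix ι ι ℂ) : Prop :=
  ∃ z : ℂ, (polyEval A z).det ≠ 0


/-- The class of Hermitian matrix polynomials. -/
def HermPoly {ι : Type*} [Fintype ι] [DecidableEq ι] {m : ℕ} :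
    Set (Fin (m+1) → Matrix ι ι ℂ) := {B | ∀ j, (B j)ᴴ = B j}

end

/-!
Write `L = ‖Λ_m‖₂²`. A perturbation `ΔP` is feasible iff `K := ΔP(λ)` satisfies `K x = r`.
Every `K` is the value at `λ` of `j ↦ (conj λ^j / L) • K`, whose norms are `‖K‖ / √L`, which is
Hermitian when `K` is and `λ` is real, and which is least among polynomials with value `K`:
for the Frobenius norm by Pythagoras,
`Σ ‖ΔA_j‖² = ‖ΔP(λ)‖² / L + Σ ‖ΔA_j - (conj λ^j / L) • ΔP(λ)‖²`, for the spectral norm by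
Cauchy–Schwarz, `‖ΔP(λ)‖₂ ≤ √L · |||ΔP|||₂`. So each backward error is `1 / √L` times the least
norm of a (Hermitian) matrix `K` with `K x = r`.

Every such `K` has `‖K‖ ≥ ‖K x‖ = ‖r‖`. Among Hermitian ones,
`M = x r^H + r x^H - (r^H x) x x^H` is Frobenius-orthogonal to every Hermitian `E` with `E x = 0`,
hence the unique Frobenius minimiser, and `‖M‖_F² = 2‖r‖² - |x^H r|²`. For the spectral norm
write `r = a x + σ u` with `a = x^H r` real (as `P(λ)` is Hermitian) and `u ⊥ x` a unit vector:
the Hermitian matrix acting on `span {x, u}` as `[[a, σ], [σ, -a]]` and as `0` on its orthogonal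
complement maps `x` to `r` and has norm `√(a² + σ²) = ‖r‖`.
-/

open Finset

section Vectors

variable {ι : Type*} [Fintype ι]

lemma vecNormSq_nonneg (v : ι → ℂ) : 0 ≤ vecNormSq v :=
  sum_nonneg fun _ _ => sq_nonneg _

lemma vecNorm_sq (v : ι → ℂ) : vecNorm v ^ 2 = vecNormSq v :=
  Real.sq_sqrt (vecNormSq_nonneg v)

lemma vecNorm_eq_norm_toLp (v : ι → ℂ) : vecNorm v = ‖WithLp.toLp 2 v‖ := by
  rw [EuclideanSpace.norm_eq]
  rfl

lemma vecNorm_smul (c : ℂ) (v : ι → ℂ) : vecNorm (c • v) = ‖c‖ * vecNorm v := by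
  rw [vecNorm_eq_norm_toLp, vecNorm_eq_norm_toLp, WithLp.toLp_smul, norm_smul]

lemma vecNorm_eq_zero_iff {v : ι → ℂ} : vecNorm v = 0 ↔ v = 0 := by
  rw [vecNorm_eq_norm_toLp, norm_eq_zero, WithLp.toLp_eq_zero]

lemma star_dotProduct_self (v : ι → ℂ) : star v ⬝ᵥ v = (vecNormSq v : ℂ) := by
  simp only [dotProduct, vecNormSq, Pi.star_apply, RCLike.star_def, Complex.conj_mul',
    Complex.ofReal_sum, Complex.ofReal_pow]

lemma vecNormSq_eq_one {x : ι → ℂ} (hx : star x ⬝ᵥ x = 1) : vecNormSq x = 1 := by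
  exact_mod_cast (star_dotProduct_self x).symm.trans hx

lemma norm_star_dotProduct_le (v w : ι → ℂ) : ‖star v ⬝ᵥ w‖ ≤ vecNorm v * vecNorm w := by
  have h : star v ⬝ᵥ w = inner ℂ (WithLp.toLp 2 v) (WithLp.toLp 2 w) := by
    rw [EuclideanSpace.inner_eq_star_dotProduct, dotProduct_comm]
  rw [h, vecNorm_eq_norm_toLp, vecNorm_eq_norm_toLp]
  exact norm_inner_le_norm _ _

lemma vecNormSq_smul_add {x w : ι → ℂ} (hx : star x ⬝ᵥ x = 1) (hxw : star x ⬝ᵥ w = 0) (c : ℂ) :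
    vecNormSq (c • x + w) = ‖c‖ ^ 2 + vecNormSq w := by
  have hwx : star w ⬝ᵥ x = 0 := by rw [star_dotProduct, hxw, star_zero]
  have h := star_dotProduct_self (c • x + w)
  simp only [star_add, star_smul, add_dotProduct, dotProduct_add, smul_dotProduct,
    dotProduct_smul, hx, hxw, hwx, star_dotProduct_self w, smul_eq_mul, RCLike.star_def,
    mul_one, mul_zero, add_zero, zero_add, Complex.mul_conj'] at h
  exact_mod_cast h.symm

lemma sq_norm_add_sq_norm_le {x u : ι → ℂ} (hx : star x ⬝ᵥ x = 1) (hxu : star x ⬝ᵥ u = 0)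
    (hu : vecNorm u ≤ 1) (v : ι → ℂ) :
    ‖star x ⬝ᵥ v‖ ^ 2 + ‖star u ⬝ᵥ v‖ ^ 2 ≤ vecNormSq v := by
  set w := v - (star x ⬝ᵥ v) • x with hw
  have hxw : star x ⬝ᵥ w = 0 := by
    rw [hw, dotProduct_sub, dotProduct_smul, hx, smul_eq_mul, mul_one, sub_self]
  have hux : star u ⬝ᵥ x = 0 := by rw [star_dotProduct, hxu, star_zero]
  have huw : ‖star u ⬝ᵥ v‖ ≤ vecNorm w :=
    calc ‖star u ⬝ᵥ v‖ = ‖star u ⬝ᵥ w‖ := by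
          rw [hw, dotProduct_sub, dotProduct_smul, hux, smul_zero, sub_zero]
      _ ≤ vecNorm u * vecNorm w := norm_star_dotProduct_le u w
      _ ≤ vecNorm w := mul_le_of_le_one_left (Real.sqrt_nonneg _) hu
  calc _ ≤ ‖star x ⬝ᵥ v‖ ^ 2 + vecNorm w ^ 2 := by gcongr
    _ = vecNormSq v := by rw [vecNorm_sq, ← vecNormSq_smul_add hx hxw, hw, add_sub_cancel]

lemma vecNormSq_mulVec_le (Q : Matrix ι ι ℂ) (v : ι → ℂ) :
    vecNormSq (Q *ᵥ v) ≤ frobNormSq Q * vecNormSq v := by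
  rw [frobNormSq, sum_mul]
  refine sum_le_sum fun i _ => ?_
  have h := norm_star_dotProduct_le (star (Q i)) v
  rw [star_star] at h
  calc ‖(Q *ᵥ v) i‖ ^ 2 ≤ (vecNorm (star (Q i)) * vecNorm v) ^ 2 := by gcongr; exact h
    _ = (∑ k, ‖Q i k‖ ^ 2) * vecNormSq v := by
      rw [mul_pow, vecNorm_sq, vecNorm_sq]
      simp [vecNormSq]

end Vectors

section Frobenius

variable {ι : Type*} [Fintype ι]

def frobInner (M N : Matrix ι ι ℂ) : ℂ := ∑ i, ∑ k, conj (M i k) * N i k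

lemma frobNormSq_nonneg (M : Matrix ι ι ℂ) : 0 ≤ frobNormSq M :=
  sum_nonneg fun _ _ => sum_nonneg fun _ _ => sq_nonneg _

lemma frobNormSq_eq_zero_iff {M : Matrix ι ι ℂ} : frobNormSq M = 0 ↔ M = 0 := by
  simp only [frobNormSq, sum_eq_zero_iff_of_nonneg (fun _ _ => sum_nonneg fun _ _ => sq_nonneg _),
    sum_eq_zero_iff_of_nonneg (fun _ _ => sq_nonneg _), mem_univ, true_implies]
  simp [← Matrix.ext_iff]

lemma frobNormSq_smul (c : ℂ) (M : Matrix ι ι ℂ) :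
    frobNormSq (c • M) = ‖c‖ ^ 2 * frobNormSq M := by
  simp [frobNormSq, mul_sum, mul_pow]

lemma frobInner_self (M : Matrix ι ι ℂ) : frobInner M M = (frobNormSq M : ℂ) := by
  simp [frobInner, frobNormSq, Complex.conj_mul']

lemma frobNormSq_add (M N : Matrix ι ι ℂ) :
    frobNormSq (M + N) = frobNormSq M + frobNormSq N + 2 * (frobInner M N).re := by
  have h (z w : ℂ) : ‖z + w‖ ^ 2 = ‖z‖ ^ 2 + ‖w‖ ^ 2 + 2 * (conj z * w).re := by
    simp only [Complex.sq_norm, Complex.normSq_add, Complex.mul_re, Complex.conj_re,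
      Complex.conj_im]
    ring
  simp only [frobNormSq, frobInner, Matrix.add_apply, h, sum_add_distrib, Complex.re_sum, mul_sum]

lemma frobInner_add_left (M N E : Matrix ι ι ℂ) :
    frobInner (M + N) E = frobInner M E + frobInner N E := by
  simp [frobInner, add_mul, sum_add_distrib]

lemma frobInner_sub_left (M N E : Matrix ι ι ℂ) :
    frobInner (M - N) E = frobInner M E - frobInner N E := by
  simp [frobInner, sub_mul, sum_sub_distrib]

lemma frobInner_sub_right (M N E : Matrix ι ι ℂ) :
    frobInner E (M - N) = frobInner E M - frobInner E N := by
  simp [frobInner, mul_sub, sum_sub_distrib]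

lemma frobInner_smul_left (c : ℂ) (M N : Matrix ι ι ℂ) :
    frobInner (c • M) N = conj c * frobInner M N := by
  simp [frobInner, mul_sum, mul_assoc]

lemma frobInner_smul_right (c : ℂ) (M N : Matrix ι ι ℂ) :
    frobInner M (c • N) = c * frobInner M N := by
  simp [frobInner, mul_sum, mul_left_comm]

lemma frobInner_sum_right {κ : Type*} (s : Finset κ) (M : Matrix ι ι ℂ)
    (N : κ → Matrix ι ι ℂ) : frobInner M (∑ k ∈ s, N k) = ∑ k ∈ s, frobInner M (N k) := by
  simp only [frobInner, Matrix.sum_apply, mul_sum]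
  exact (sum_congr rfl fun _ _ => sum_comm).trans sum_comm

lemma frobInner_vecMulVec (p q : ι → ℂ) (E : Matrix ι ι ℂ) :
    frobInner (vecMulVec p (star q)) E = star p ⬝ᵥ (E *ᵥ q) := by
  simp only [frobInner, vecMulVec_apply, mulVec, dotProduct, mul_sum, Pi.star_apply,
    RCLike.star_def, map_mul, Complex.conj_conj]
  exact sum_congr rfl fun _ _ => sum_congr rfl fun _ _ => by ring

end Frobenius

section SpectralNorm

variable {ι : Type*} [Fintype ι] [DecidableEq ι]

lemma vecNorm_mulVec_le (M : Matrix ι ι ℂ) (v : ι → ℂ) :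
    vecNorm (M *ᵥ v) ≤ specNorm M * vecNorm v := by
  have h := (Matrix.toEuclideanCLM (𝕜 := ℂ) M).le_opNorm (WithLp.toLp 2 v)
  rwa [Matrix.toEuclideanCLM_toLp, ← vecNorm_eq_norm_toLp, ← vecNorm_eq_norm_toLp] at h

lemma specNorm_nonneg (M : Matrix ι ι ℂ) : 0 ≤ specNorm M := norm_nonneg _

lemma specNorm_le_of_forall {M : Matrix ι ι ℂ} {c : ℝ} (hc : 0 ≤ c)
    (h : ∀ v, vecNorm (M *ᵥ v) ≤ c * vecNorm v) : specNorm M ≤ c :=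
  ContinuousLinearMap.opNorm_le_bound _ hc fun w => by
    have hw := h (WithLp.ofLp w)
    rwa [vecNorm_eq_norm_toLp, vecNorm_eq_norm_toLp, WithLp.toLp_ofLp] at hw

lemma specNorm_smul (c : ℂ) (M : Matrix ι ι ℂ) : specNorm (c • M) = ‖c‖ * specNorm M := by
  rw [specNorm, map_smul, norm_smul]
  rfl

lemma specNorm_polyEval_le {m : ℕ} (B : Fin (m+1) → Matrix ι ι ℂ) (z : ℂ) :
    specNorm (polyEval B z) ≤ √(lamNormSq m z) * polyNorm2 B :=
  calc specNorm (polyEval B z) ≤ ∑ j : Fin (m+1), ‖z ^ (j : ℕ)‖ * specNorm (B j) := by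
        rw [specNorm, polyEval, map_sum]
        refine (norm_sum_le _ _).trans (le_of_eq (sum_congr rfl fun j _ => ?_))
        rw [map_smul, norm_smul]
        rfl
    _ ≤ √(lamNormSq m z) * polyNorm2 B := Real.sum_mul_le_sqrt_mul_sqrt _ _ _

end SpectralNorm

section Lift

variable {ι : Type*} {m : ℕ}

lemma lamNormSq_pos (m : ℕ) (z : ℂ) : 0 < lamNormSq m z :=
  lt_of_lt_of_le (by simp)
    (single_le_sum (f := fun j : Fin (m+1) => ‖z ^ (j : ℕ)‖ ^ 2) (fun _ _ => sq_nonneg _)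
      (mem_univ 0))

/-- Coefficients of the least-norm polynomial with prescribed value at `z`; for real `z = λ`
these are the paper's `λ^j / ‖Λ_m‖₂²`. -/
noncomputable def liftCoeff (m : ℕ) (z : ℂ) (j : Fin (m+1)) : ℂ :=
  conj (z ^ (j : ℕ)) / (lamNormSq m z : ℂ)

noncomputable def polyLift (m : ℕ) (z : ℂ) (K : Matrix ι ι ℂ) : Fin (m+1) → Matrix ι ι ℂ :=
  fun j => liftCoeff m z j • K

lemma conj_liftCoeff (z : ℂ) (j : Fin (m+1)) :
    conj (liftCoeff m z j) = z ^ (j : ℕ) / (lamNormSq m z : ℂ) := by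
  rw [liftCoeff, map_div₀, Complex.conj_conj, Complex.conj_ofReal]

lemma liftCoeff_ofReal (lam : ℝ) (j : Fin (m+1)) :
    liftCoeff m lam j = (lam : ℂ) ^ (j : ℕ) / (lamNormSq m lam : ℂ) := by
  rw [liftCoeff, ← Complex.ofReal_pow, Complex.conj_ofReal]

lemma sum_sq_norm_liftCoeff (m : ℕ) (z : ℂ) :
    ∑ j, ‖liftCoeff m z j‖ ^ 2 = (lamNormSq m z)⁻¹ := by
  simp only [liftCoeff, norm_div, Complex.norm_conj, Complex.norm_real, Real.norm_eq_abs,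
    abs_of_pos (lamNormSq_pos m z), div_pow, ← sum_div]
  rw [← lamNormSq]
  field_simp

lemma sum_pow_mul_liftCoeff (m : ℕ) (z : ℂ) :
    ∑ j : Fin (m+1), z ^ (j : ℕ) * liftCoeff m z j = 1 := by
  have hL : (lamNormSq m z : ℂ) ≠ 0 := Complex.ofReal_ne_zero.2 (lamNormSq_pos m z).ne'
  simp only [liftCoeff, mul_div_assoc', Complex.mul_conj', ← sum_div, ← Complex.ofReal_pow,
    ← Complex.ofReal_sum]
  exact div_self hL

lemma polyEval_polyLift (m : ℕ) (z : ℂ) (K : Matrix ι ι ℂ) : polyEval (polyLift m z K) z = K := by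
  simp only [polyEval, polyLift, smul_smul, ← sum_smul, sum_pow_mul_liftCoeff, one_smul]

variable [Fintype ι]

lemma polyNormF_polyLift (m : ℕ) (z : ℂ) (K : Matrix ι ι ℂ) :
    polyNormF (polyLift m z K) = √(frobNormSq K / lamNormSq m z) := by
  simp only [polyNormF, polyLift, frobNormSq_smul, ← sum_mul, sum_sq_norm_liftCoeff,
    inv_mul_eq_div]

lemma polyNorm2_polyLift [DecidableEq ι] (m : ℕ) (z : ℂ) (K : Matrix ι ι ℂ) :
    polyNorm2 (polyLift m z K) = specNorm K / √(lamNormSq m z) := by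
  simp only [polyNorm2, polyLift, specNorm_smul, mul_pow, ← sum_mul, sum_sq_norm_liftCoeff,
    inv_mul_eq_div]
  rw [Real.sqrt_div' _ (lamNormSq_pos m z).le, Real.sqrt_sq (specNorm_nonneg K)]

lemma polyLift_mem_hermPoly [DecidableEq ι] (m : ℕ) (lam : ℝ) {K : Matrix ι ι ℂ}
    (hK : K.IsHermitian) : polyLift m lam K ∈ HermPoly := fun j => by
  rw [polyLift, conjTranspose_smul, hK.eq, liftCoeff_ofReal, star_div₀, ← Complex.ofReal_pow]
  simp only [Complex.star_def, Complex.conj_ofReal]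

lemma isHermitian_polyEval [DecidableEq ι] {B : Fin (m+1) → Matrix ι ι ℂ} (hB : B ∈ HermPoly)
    (lam : ℝ) : (polyEval B lam).IsHermitian := by
  rw [IsHermitian, polyEval, conjTranspose_sum]
  refine sum_congr rfl fun j _ => ?_
  rw [conjTranspose_smul, hB j, ← Complex.ofReal_pow, Complex.star_def, Complex.conj_ofReal]

/-- `polyLift m z (polyEval B z)` is the orthogonal projection of `B` onto the range of
`polyLift m z`. -/
lemma sum_frobNormSq_eq (B : Fin (m+1) → Matrix ι ι ℂ) (z : ℂ) :
    ∑ j, frobNormSq (B j) = frobNormSq (polyEval B z) / lamNormSq m z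
      + ∑ j, frobNormSq (B j - polyLift m z (polyEval B z) j) := by
  set Q := polyEval B z
  set E := fun j => B j - polyLift m z Q j with hE
  have horth : ∑ j, conj (liftCoeff m z j) • E j = 0 := by
    have h1 : ∑ j, conj (liftCoeff m z j) • B j = (lamNormSq m z : ℂ)⁻¹ • Q := by
      simp only [conj_liftCoeff, div_eq_inv_mul, mul_smul, ← smul_sum]
      rfl
    have h2 : ∑ j, conj (liftCoeff m z j) • polyLift m z Q j = (lamNormSq m z : ℂ)⁻¹ • Q := by
      simp only [polyLift, smul_smul, ← sum_smul, Complex.conj_mul', ← Complex.ofReal_pow,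
        ← Complex.ofReal_sum, sum_sq_norm_liftCoeff, Complex.ofReal_inv]
    simp only [hE, smul_sub, sum_sub_distrib, h1, h2, sub_self]
  have hcross : ∑ j, (frobInner (polyLift m z Q j) (E j)).re = 0 := by
    simp only [polyLift, frobInner_smul_left, ← frobInner_smul_right, ← Complex.re_sum,
      ← frobInner_sum_right, horth]
    simp [frobInner]
  calc ∑ j, frobNormSq (B j)
      = ∑ j, (frobNormSq (polyLift m z Q j) + frobNormSq (E j)
          + 2 * (frobInner (polyLift m z Q j) (E j)).re) :=
        sum_congr rfl fun j _ => by rw [← frobNormSq_add, hE, add_sub_cancel]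
    _ = frobNormSq Q / lamNormSq m z + ∑ j, frobNormSq (E j) := by
        rw [sum_add_distrib, sum_add_distrib, ← mul_sum, hcross, mul_zero, add_zero]
        simp only [polyLift, frobNormSq_smul, ← sum_mul, sum_sq_norm_liftCoeff, inv_mul_eq_div]

end Lift

section HermitianFrobenius

variable {ι : Type*} [Fintype ι] {x r : ι → ℂ}

def minFrobHerm (x r : ι → ℂ) : Matrix ι ι ℂ :=
  vecMulVec x (star r) + vecMulVec r (star x) - (star r ⬝ᵥ x) • vecMulVec x (star x)

lemma isHermitian_minFrobHerm (ha : (star x ⬝ᵥ r).im = 0) : (minFrobHerm x r).IsHermitian := by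
  have hrx : star (star r ⬝ᵥ x) = star r ⬝ᵥ x := by
    rw [star_dotProduct r x, star_star, Complex.star_def, Complex.conj_eq_iff_im.2 ha]
  simp only [IsHermitian, minFrobHerm, conjTranspose_sub, conjTranspose_add, conjTranspose_smul,
    conjTranspose_vecMulVec, star_star, hrx, add_comm (vecMulVec r (star x))]

lemma minFrobHerm_mulVec (hx : star x ⬝ᵥ x = 1) : minFrobHerm x r *ᵥ x = r := by
  simp only [minFrobHerm, sub_mulVec, add_mulVec, smul_mulVec, vecMulVec_mulVec, hx,
    op_smul_eq_smul, one_smul]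
  abel

lemma frobInner_minFrobHerm (ha : (star x ⬝ᵥ r).im = 0)
    {Q : Matrix ι ι ℂ} (hQ : Q.IsHermitian) (hQx : Q *ᵥ x = r) :
    frobInner (minFrobHerm x r) Q = ((2 * vecNormSq r - ‖star x ⬝ᵥ r‖ ^ 2 : ℝ) : ℂ) := by
  have hxQ : star x ᵥ* Q = star r := by rw [← hQx, star_mulVec, hQ.eq]
  have hrx : star r ⬝ᵥ x = star x ⬝ᵥ r := by
    rw [star_dotProduct r x, Complex.star_def, Complex.conj_eq_iff_im.2 ha]
  rw [minFrobHerm, frobInner_sub_left, frobInner_add_left, frobInner_smul_left,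
    frobInner_vecMulVec, frobInner_vecMulVec, frobInner_vecMulVec, hQx, dotProduct_mulVec, hxQ,
    star_dotProduct_self, hrx, Complex.conj_mul']
  push_cast
  ring

lemma frobNormSq_minFrobHerm (hx : star x ⬝ᵥ x = 1) (ha : (star x ⬝ᵥ r).im = 0) :
    frobNormSq (minFrobHerm x r) = 2 * vecNormSq r - ‖star x ⬝ᵥ r‖ ^ 2 := by
  exact_mod_cast (frobInner_self _).symm.trans
    (frobInner_minFrobHerm ha (isHermitian_minFrobHerm ha) (minFrobHerm_mulVec hx))

lemma frobNormSq_eq_frobNormSq_minFrobHerm_add (hx : star x ⬝ᵥ x = 1)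
    (ha : (star x ⬝ᵥ r).im = 0) {Q : Matrix ι ι ℂ} (hQ : Q.IsHermitian) (hQx : Q *ᵥ x = r) :
    frobNormSq Q = frobNormSq (minFrobHerm x r) + frobNormSq (Q - minFrobHerm x r) := by
  have horth : frobInner (minFrobHerm x r) (Q - minFrobHerm x r) = 0 := by
    rw [frobInner_sub_right, frobInner_minFrobHerm ha hQ hQx,
      frobInner_minFrobHerm ha (isHermitian_minFrobHerm ha) (minFrobHerm_mulVec hx), sub_self]
  calc frobNormSq Q = frobNormSq (minFrobHerm x r + (Q - minFrobHerm x r)) := by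
        rw [add_sub_cancel]
    _ = _ := by rw [frobNormSq_add, horth, Complex.zero_re, mul_zero, add_zero]

end HermitianFrobenius

section HermitianSpectral

variable {ι : Type*} {x u : ι → ℂ}

def scaledReflection (x u : ι → ℂ) (a σ : ℝ) : Matrix ι ι ℂ :=
  (a : ℂ) • (vecMulVec x (star x) - vecMulVec u (star u))
    + (σ : ℂ) • (vecMulVec x (star u) + vecMulVec u (star x))

lemma isHermitian_scaledReflection (a σ : ℝ) : (scaledReflection x u a σ).IsHermitian := by
  simp only [IsHermitian, scaledReflection, conjTranspose_add, conjTranspose_sub,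
    conjTranspose_smul, conjTranspose_vecMulVec, star_star, Complex.star_def, Complex.conj_ofReal,
    add_comm (vecMulVec u (star x))]

variable [Fintype ι]

lemma scaledReflection_mulVec (a σ : ℝ) (v : ι → ℂ) :
    scaledReflection x u a σ *ᵥ v
      = (a * (star x ⬝ᵥ v) + σ * (star u ⬝ᵥ v)) • x
        + (σ * (star x ⬝ᵥ v) - a * (star u ⬝ᵥ v)) • u := by
  simp only [scaledReflection, add_mulVec, sub_mulVec, smul_mulVec, vecMulVec_mulVec,
    op_smul_eq_smul]
  module

lemma sq_norm_add_sq_norm_rotate (a σ : ℝ) (c d : ℂ) :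
    ‖a * c + σ * d‖ ^ 2 + ‖σ * c - a * d‖ ^ 2 = (a ^ 2 + σ ^ 2) * (‖c‖ ^ 2 + ‖d‖ ^ 2) := by
  simp only [Complex.sq_norm, Complex.normSq_apply, Complex.add_re, Complex.add_im, Complex.sub_re,
    Complex.sub_im, Complex.mul_re, Complex.mul_im, Complex.ofReal_re, Complex.ofReal_im]
  ring

lemma vecNormSq_scaledReflection_mulVec_le (hx : star x ⬝ᵥ x = 1) (hxu : star x ⬝ᵥ u = 0)
    (hu : vecNorm u ≤ 1) (a σ : ℝ) (v : ι → ℂ) :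
    vecNormSq (scaledReflection x u a σ *ᵥ v) ≤ (a ^ 2 + σ ^ 2) * vecNormSq v := by
  set c := star x ⬝ᵥ v
  set d := star u ⬝ᵥ v
  set β := σ * c - a * d
  have hβu : vecNormSq (β • u) ≤ ‖β‖ ^ 2 := by
    rw [← vecNorm_sq, vecNorm_smul, mul_pow]
    exact mul_le_of_le_one_right (sq_nonneg _) (pow_le_one₀ (Real.sqrt_nonneg _) hu)
  calc vecNormSq (scaledReflection x u a σ *ᵥ v)
      = ‖a * c + σ * d‖ ^ 2 + vecNormSq (β • u) := by
        rw [scaledReflection_mulVec,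
          vecNormSq_smul_add hx (by rw [dotProduct_smul, hxu, smul_zero])]
    _ ≤ ‖a * c + σ * d‖ ^ 2 + ‖β‖ ^ 2 := by gcongr
    _ = (a ^ 2 + σ ^ 2) * (‖c‖ ^ 2 + ‖d‖ ^ 2) := sq_norm_add_sq_norm_rotate a σ c d
    _ ≤ (a ^ 2 + σ ^ 2) * vecNormSq v := by gcongr; exact sq_norm_add_sq_norm_le hx hxu hu v

end HermitianSpectral

lemma exists_isHermitian_mulVec_eq_specNorm_le {ι : Type*} [Fintype ι] [DecidableEq ι]
    {x r : ι → ℂ} (hx : star x ⬝ᵥ x = 1) (ha : (star x ⬝ᵥ r).im = 0) :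
    ∃ H : Matrix ι ι ℂ, H.IsHermitian ∧ H *ᵥ x = r ∧ specNorm H ≤ vecNorm r := by
  set a := (star x ⬝ᵥ r).re
  have ha' : (a : ℂ) = star x ⬝ᵥ r := Complex.conj_eq_iff_re.1 (Complex.conj_eq_iff_im.2 ha)
  set s := r - (a : ℂ) • x with hs
  have hxs : star x ⬝ᵥ s = 0 := by
    rw [hs, dotProduct_sub, dotProduct_smul, hx, ha', smul_eq_mul, mul_one, sub_self]
  set σ := vecNorm s
  set u := (σ : ℂ)⁻¹ • s
  have hsu : (σ : ℂ) • u = s := by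
    rcases eq_or_ne σ 0 with hσ | hσ
    · rw [hσ, vecNorm_eq_zero_iff.1 hσ, Complex.ofReal_zero, zero_smul]
    · exact smul_inv_smul₀ (Complex.ofReal_ne_zero.2 hσ) s
  have hxu : star x ⬝ᵥ u = 0 := by rw [dotProduct_smul, hxs, smul_zero]
  have hu : vecNorm u ≤ 1 := by
    have hσ : 0 ≤ σ := Real.sqrt_nonneg _
    rw [vecNorm_smul, norm_inv, Complex.norm_real, Real.norm_of_nonneg hσ]
    exact inv_mul_le_one_of_le₀ le_rfl hσ
  have hr : r = (a : ℂ) • x + (σ : ℂ) • u := by rw [hsu, hs, add_sub_cancel]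
  have hnorm : vecNorm r = √(a ^ 2 + σ ^ 2) := by
    rw [vecNorm, hr, vecNormSq_smul_add hx (by rw [hsu, hxs]), hsu, ← vecNorm_sq,
      Complex.norm_real, Real.norm_eq_abs, sq_abs]
  refine ⟨scaledReflection x u a σ, isHermitian_scaledReflection a σ, ?_, ?_⟩
  · rw [scaledReflection_mulVec, hx, star_dotProduct, hxu, star_zero, hr]
    simp
  · rw [hnorm]
    refine specNorm_le_of_forall (Real.sqrt_nonneg _) fun v => ?_
    rw [vecNorm, vecNorm, ← Real.sqrt_mul (by positivity)]
    exact Real.sqrt_le_sqrt (vecNormSq_scaledReflection_mulVec_le hx hxu hu a σ v)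

section BackwardError

variable {ι : Type*} [Fintype ι] {m : ℕ} {N : (Fin (m+1) → Matrix ι ι ℂ) → ℝ}
  {S : Set (Fin (m+1) → Matrix ι ι ℂ)} {z : ℂ} {x r : ι → ℂ} {A : Fin (m+1) → Matrix ι ι ℂ}

lemma polyEval_add_mulVec_eq_zero_iff (hr : r = -(polyEval A z *ᵥ x))
    (B : Fin (m+1) → Matrix ι ι ℂ) :
    (polyEval A z + polyEval B z) *ᵥ x = 0 ↔ polyEval B z *ᵥ x = r := by
  rw [add_mulVec, hr, add_eq_zero_iff_neg_eq, eq_comm]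

lemma eta_eq_of_forall_le (hr : r = -(polyEval A z *ᵥ x)) {B₀ : Fin (m+1) → Matrix ι ι ℂ}
    (hB₀ : B₀ ∈ S) (hB₀x : polyEval B₀ z *ᵥ x = r)
    (hmin : ∀ B ∈ S, polyEval B z *ᵥ x = r → N B₀ ≤ N B) : eta N S z x A = N B₀ :=
  IsLeast.csInf_eq ⟨⟨B₀, hB₀, (polyEval_add_mulVec_eq_zero_iff hr B₀).2 hB₀x, rfl⟩,
    by rintro _ ⟨B, hB, hBx, rfl⟩; exact hmin B hB ((polyEval_add_mulVec_eq_zero_iff hr B).1 hBx)⟩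

lemma le_eta (hr : r = -(polyEval A z *ᵥ x)) {B₀ : Fin (m+1) → Matrix ι ι ℂ}
    (hB₀ : B₀ ∈ S) (hB₀x : polyEval B₀ z *ᵥ x = r) {c : ℝ}
    (hlb : ∀ B ∈ S, polyEval B z *ᵥ x = r → c ≤ N B) : c ≤ eta N S z x A :=
  le_csInf ⟨_, B₀, hB₀, (polyEval_add_mulVec_eq_zero_iff hr B₀).2 hB₀x, rfl⟩
    (by rintro _ ⟨B, hB, hBx, rfl⟩; exact hlb B hB ((polyEval_add_mulVec_eq_zero_iff hr B).1 hBx))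

lemma vecNorm_div_le_polyNormF (hx : star x ⬝ᵥ x = 1) {B : Fin (m+1) → Matrix ι ι ℂ}
    (hBx : polyEval B z *ᵥ x = r) : vecNorm r / √(lamNormSq m z) ≤ polyNormF B := by
  have hL := (lamNormSq_pos m z).le
  have hr : vecNormSq r ≤ frobNormSq (polyEval B z) := by
    simpa [hBx, vecNormSq_eq_one hx] using vecNormSq_mulVec_le (polyEval B z) x
  have hB : frobNormSq (polyEval B z) / lamNormSq m z ≤ ∑ j, frobNormSq (B j) := by
    rw [sum_frobNormSq_eq B z]
    exact le_add_of_nonneg_right (sum_nonneg fun _ _ => frobNormSq_nonneg _)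
  rw [vecNorm, ← Real.sqrt_div' _ hL, polyNormF]
  exact Real.sqrt_le_sqrt ((div_le_div_of_nonneg_right hr hL).trans hB)

lemma vecNorm_div_le_polyNorm2 [DecidableEq ι] (hx : star x ⬝ᵥ x = 1)
    {B : Fin (m+1) → Matrix ι ι ℂ} (hBx : polyEval B z *ᵥ x = r) :
    vecNorm r / √(lamNormSq m z) ≤ polyNorm2 B := by
  have hnx : vecNorm x = 1 := by rw [vecNorm, vecNormSq_eq_one hx, Real.sqrt_one]
  rw [div_le_iff₀ (Real.sqrt_pos.2 (lamNormSq_pos m z)), mul_comm]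
  calc vecNorm r ≤ specNorm (polyEval B z) := by
        simpa [hBx, hnx] using vecNorm_mulVec_le (polyEval B z) x
    _ ≤ _ := specNorm_polyEval_le B z

lemma vecNorm_div_le_eta_polyNormF (hx : star x ⬝ᵥ x = 1) (hr : r = -(polyEval A z *ᵥ x)) :
    vecNorm r / √(lamNormSq m z) ≤ eta polyNormF Set.univ z x A :=
  le_eta hr (Set.mem_univ (polyLift m z (minFrobHerm x r)))
    (by rw [polyEval_polyLift, minFrobHerm_mulVec hx])
    fun _ _ hBx => vecNorm_div_le_polyNormF hx hBx

variable [DecidableEq ι] {lam : ℝ}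

lemma sum_frobNormSq_eq_of_mem_hermPoly (hx : star x ⬝ᵥ x = 1) (ha : (star x ⬝ᵥ r).im = 0)
    {B : Fin (m+1) → Matrix ι ι ℂ} (hB : B ∈ HermPoly) (hBx : polyEval B lam *ᵥ x = r) :
    ∑ j, frobNormSq (B j)
      = frobNormSq (minFrobHerm x r) / lamNormSq m lam
        + (frobNormSq (polyEval B lam - minFrobHerm x r) / lamNormSq m lam
          + ∑ j, frobNormSq (B j - polyLift m lam (polyEval B lam) j)) := by
  rw [sum_frobNormSq_eq B, frobNormSq_eq_frobNormSq_minFrobHerm_add hx ha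
    (isHermitian_polyEval hB lam) hBx, add_div, add_assoc]

lemma polyNormF_polyLift_minFrobHerm_le (hx : star x ⬝ᵥ x = 1) (ha : (star x ⬝ᵥ r).im = 0)
    {B : Fin (m+1) → Matrix ι ι ℂ} (hB : B ∈ HermPoly) (hBx : polyEval B lam *ᵥ x = r) :
    polyNormF (polyLift m lam (minFrobHerm x r)) ≤ polyNormF B := by
  rw [polyNormF_polyLift, polyNormF, sum_frobNormSq_eq_of_mem_hermPoly hx ha hB hBx]
  refine Real.sqrt_le_sqrt (le_add_of_nonneg_right (add_nonneg ?_ ?_))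
  · exact div_nonneg (frobNormSq_nonneg _) (lamNormSq_pos m lam).le
  · exact sum_nonneg fun _ _ => frobNormSq_nonneg _

lemma eq_polyLift_minFrobHerm_of_polyNormF_le (hx : star x ⬝ᵥ x = 1)
    (ha : (star x ⬝ᵥ r).im = 0) {B : Fin (m+1) → Matrix ι ι ℂ} (hB : B ∈ HermPoly)
    (hBx : polyEval B lam *ᵥ x = r)
    (hle : polyNormF B ≤ polyNormF (polyLift m lam (minFrobHerm x r))) :
    B = polyLift m lam (minFrobHerm x r) := by
  have hL := lamNormSq_pos m lam
  rw [polyNormF_polyLift, polyNormF, sum_frobNormSq_eq_of_mem_hermPoly hx ha hB hBx,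
    Real.sqrt_le_sqrt_iff (div_nonneg (frobNormSq_nonneg _) hL.le)] at hle
  have hval := div_nonneg (frobNormSq_nonneg (polyEval B lam - minFrobHerm x r)) hL.le
  have hcoeff := sum_nonneg fun j (_ : j ∈ univ) =>
    frobNormSq_nonneg (B j - polyLift m lam (polyEval B lam) j)
  have hQ : polyEval B lam = minFrobHerm x r := by
    have h : frobNormSq (polyEval B lam - minFrobHerm x r) / lamNormSq m lam = 0 := by linarith
    rw [div_eq_zero_iff, or_iff_left hL.ne', frobNormSq_eq_zero_iff, sub_eq_zero] at h
    exact h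
  have hE : ∑ j, frobNormSq (B j - polyLift m lam (polyEval B lam) j) = 0 := by linarith
  funext j
  rw [← hQ, ← sub_eq_zero, ← frobNormSq_eq_zero_iff]
  exact (sum_eq_zero_iff_of_nonneg fun j _ => frobNormSq_nonneg _).1 hE j (mem_univ j)

lemma eta_polyNormF_hermPoly_eq (hx : star x ⬝ᵥ x = 1) (ha : (star x ⬝ᵥ r).im = 0)
    (hr : r = -(polyEval A lam *ᵥ x)) :
    eta polyNormF HermPoly lam x A = polyNormF (polyLift m lam (minFrobHerm x r)) :=
  eta_eq_of_forall_le hr (polyLift_mem_hermPoly m lam (isHermitian_minFrobHerm ha))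
    (by rw [polyEval_polyLift, minFrobHerm_mulVec hx])
    fun _ hB hBx => polyNormF_polyLift_minFrobHerm_le hx ha hB hBx

lemma eta_polyNorm2_eq (hx : star x ⬝ᵥ x = 1) (ha : (star x ⬝ᵥ r).im = 0)
    (hr : r = -(polyEval A lam *ᵥ x)) (hS : HermPoly ⊆ S) :
    eta polyNorm2 S lam x A = vecNorm r / √(lamNormSq m lam) := by
  obtain ⟨H, hH, hHx, hHr⟩ := exists_isHermitian_mulVec_eq_specNorm_le hx ha
  have hHx' : polyEval (polyLift m lam H) lam *ᵥ x = r := by rw [polyEval_polyLift, hHx]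
  have hub : polyNorm2 (polyLift m lam H) ≤ vecNorm r / √(lamNormSq m lam) := by
    rw [polyNorm2_polyLift]
    gcongr
  rw [eta_eq_of_forall_le hr (hS (polyLift_mem_hermPoly m lam hH)) hHx'
    fun _ _ hBx => hub.trans (vecNorm_div_le_polyNorm2 hx hBx)]
  exact hub.antisymm (vecNorm_div_le_polyNorm2 hx hHx')

end BackwardError

theorem hermitian_backward_error_real_general {n m : ℕ}
    (A : Fin (m+1) → Matrix (Fin n) (Fin n) ℂ)
    (hA : A ∈ HermPoly)
    (lam : ℝ) (x : Fin n → ℂ) (hx : star x ⬝ᵥ x = 1)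
    (r : Fin n → ℂ) (hr : r = -(polyEval A (lam : ℂ) *ᵥ x))
    (ΔA : Fin (m+1) → Matrix (Fin n) (Fin n) ℂ)
    (hΔ : ∀ j : Fin (m+1),
      ΔA j = (((lam : ℂ) ^ (j : ℕ)) / (lamNormSq m (lam : ℂ) : ℂ)) •
        (vecMulVec x (star r) + vecMulVec r (star x)
          - (star r ⬝ᵥ x) • vecMulVec x (star x))) :
    eta polyNormF HermPoly (lam : ℂ) x A
      = Real.sqrt (2 * vecNormSq r - ‖star x ⬝ᵥ r‖ ^ 2)
          / Real.sqrt (lamNormSq m (lam : ℂ)) ∧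
    eta polyNormF HermPoly (lam : ℂ) x A
      ≤ Real.sqrt 2 * eta polyNormF Set.univ (lam : ℂ) x A ∧
    eta polyNorm2 HermPoly (lam : ℂ) x A = eta polyNorm2 Set.univ (lam : ℂ) x A ∧
    eta polyNorm2 Set.univ (lam : ℂ) x A = vecNorm r / Real.sqrt (lamNormSq m (lam : ℂ)) ∧
    ΔA ∈ HermPoly ∧
    (polyEval A (lam : ℂ) + polyEval ΔA (lam : ℂ)) *ᵥ x = 0 ∧
    polyNormF ΔA = eta polyNormF HermPoly (lam : ℂ) x A ∧
    (∀ ΔB ∈ HermPoly, (polyEval A (lam : ℂ) + polyEval ΔB (lam : ℂ)) *ᵥ x = 0 →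
      polyNormF ΔB = eta polyNormF HermPoly (lam : ℂ) x A → ΔB = ΔA) := by
  have ha : (star x ⬝ᵥ r).im = 0 := by
    rw [hr, dotProduct_neg, Complex.neg_im, neg_eq_zero]
    exact (isHermitian_polyEval hA lam).im_star_dotProduct_mulVec_self x
  have hΔA : ΔA = polyLift m lam (minFrobHerm x r) :=
    funext fun j => by rw [hΔ j, polyLift, liftCoeff_ofReal, minFrobHerm]
  have hΔAx : polyEval ΔA lam *ᵥ x = r := by rw [hΔA, polyEval_polyLift, minFrobHerm_mulVec hx]
  have hetaF : eta polyNormF HermPoly lam x A = polyNormF ΔA :=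
    hΔA ▸ eta_polyNormF_hermPoly_eq hx ha hr
  have hnormF : polyNormF ΔA
      = √(2 * vecNormSq r - ‖star x ⬝ᵥ r‖ ^ 2) / √(lamNormSq m lam) := by
    rw [hΔA, polyNormF_polyLift, frobNormSq_minFrobHerm hx ha,
      Real.sqrt_div' _ (lamNormSq_pos m lam).le]
  refine ⟨hetaF.trans hnormF, ?_, (eta_polyNorm2_eq hx ha hr le_rfl).trans
    (eta_polyNorm2_eq hx ha hr (Set.subset_univ _)).symm,
    eta_polyNorm2_eq hx ha hr (Set.subset_univ _),
    hΔA ▸ polyLift_mem_hermPoly m lam (isHermitian_minFrobHerm ha),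
    (polyEval_add_mulVec_eq_zero_iff hr ΔA).2 hΔAx, hetaF.symm, fun B hB hBx hBnorm => ?_⟩
  · rw [hetaF, hnormF]
    calc _ ≤ √2 * (vecNorm r / √(lamNormSq m lam)) := by
          rw [vecNorm, ← mul_div_assoc, ← Real.sqrt_mul zero_le_two]
          gcongr
          linarith [sq_nonneg ‖star x ⬝ᵥ r‖]
      _ ≤ _ := by grw [vecNorm_div_le_eta_polyNormF hx hr]
  · rw [hΔA] at hetaF ⊢
    exact eq_polyLift_minFrobHerm_of_polyNormF_le hx ha hB
      ((polyEval_add_mulVec_eq_zero_iff hr B).1 hBx) (hBnorm.trans hetaF).le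

/-- Structured backward errors of an approximate eigenpair of a Hermitian
matrix polynomial at a real point `λ`: explicit Frobenius formula bounded by `√2·η`, the
spectral structured backward error equals the unstructured one `‖r‖₂/‖Λ_m‖₂`, and the
unique minimal Hermitian perturbation for the Frobenius norm. -/
theorem hermitian_backward_error_real {n m : ℕ}
    (A : Fin (m+1) → Matrix (Fin n) (Fin n) ℂ)
    (hA : A ∈ HermPoly) (hreg : Regular A)
    (lam : ℝ) (x : Fin n → ℂ) (hx : star x ⬝ᵥ x = 1)
    (r : Fin n → ℂ) (hr : r = -(polyEval A (lam : ℂ) *ᵥ x))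
    (ΔA : Fin (m+1) → Matrix (Fin n) (Fin n) ℂ)
    (hΔ : ∀ j : Fin (m+1),
      ΔA j = (((lam : ℂ) ^ (j : ℕ)) / (lamNormSq m (lam : ℂ) : ℂ)) •
        (vecMulVec x (star r) + vecMulVec r (star x)
          - (star r ⬝ᵥ x) • vecMulVec x (star x))) :
    eta polyNormF HermPoly (lam : ℂ) x A
      = Real.sqrt (2 * vecNormSq r - ‖star x ⬝ᵥ r‖ ^ 2)
          / Real.sqrt (lamNormSq m (lam : ℂ)) ∧
    eta polyNormF HermPoly (lam : ℂ) x A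
      ≤ Real.sqrt 2 * eta polyNormF Set.univ (lam : ℂ) x A ∧
    eta polyNorm2 HermPoly (lam : ℂ) x A = eta polyNorm2 Set.univ (lam : ℂ) x A ∧
    eta polyNorm2 Set.univ (lam : ℂ) x A = vecNorm r / Real.sqrt (lamNormSq m (lam : ℂ)) ∧
    ΔA ∈ HermPoly ∧
    (polyEval A (lam : ℂ) + polyEval ΔA (lam : ℂ)) *ᵥ x = 0 ∧
    polyNormF ΔA = eta polyNormF HermPoly (lam : ℂ) x A ∧
    (∀ ΔB ∈ HermPoly, (polyEval A (lam : ℂ) + polyEval ΔB (lam : ℂ)) *ᵥ x = 0 →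
      polyNormF ΔB = eta polyNormF HermPoly (lam : ℂ) x A → ΔB = ΔA) :=
  hermitian_backward_error_real_general A hA lam x hx r hr ΔA hΔ
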